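/- Fix a horizon M ∈ ℕ, a finite nonempty action set A, and Δ ≥ 0. Let v_m : A → ℝ for m = 1,…,M satisfy |v_m(a) − v_m(a')| ≤ Δ for all a, a' ∈ A and all m. Define recursively: R_0(a) = 0; σ_m(a) = max(R_{m−1}(a),0) / ∑_{b∈A} max(R_{m−1}(b),0) if ∑_{b∈A} max(R_{m−1}(b),0) > 0, and σ_m(a) = 1/|A| otherwise; r_m(a) = v_m(a) − ∑_{b∈A} σ_m(b)·v_m(b); and R_m(a) = R_{m−1}(a) + r_m(a). Then max_{a∈A} R_M(a) ≤ Δ·√(|A|·M). -/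

import Mathlib

/-!
The potential `Φ(R) = ∑ₐ max(R a, 0)²` grows by at most `|A|·Δ²` per round: expanding
`max(x + y, 0)² ≤ max(x, 0)² + 2·max(x, 0)·y + y²`, the cross term vanishes because regret
matching plays proportionally to `max(R, 0)` (Blackwell's condition), and each instantaneous
regret is at most `Δ` in absolute value. Hence `Φ(R_M) ≤ |A|·Δ²·M`, and every single
`max(R_M a, 0)²` is bounded by `Φ(R_M)`.
-/

open Finset

lemma sq_max_add_zero_le (x y : ℝ) :
    max (x + y) 0 ^ 2 ≤ max x 0 ^ 2 + 2 * max x 0 * y + y ^ 2 := by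
  rcases le_or_gt (x + y) 0 with h | h
  · rw [max_eq_right h]
    nlinarith [sq_nonneg (max x 0 + y)]
  · rw [max_eq_left h.le]
    nlinarith [le_max_left x 0, le_max_right x 0]

section RegretMatching

variable {ι : Type*} [Fintype ι]

lemma abs_sub_sum_mul_le {p v : ι → ℝ} {Δ : ℝ} (hp : ∀ b, 0 ≤ p b)
    (hp1 : ∑ b, p b = 1) (a : ι) (hv : ∀ b, |v a - v b| ≤ Δ) : |v a - ∑ b, p b * v b| ≤ Δ := by
  have hsplit : v a - ∑ b, p b * v b = ∑ b, p b * (v a - v b) := by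
    simp only [mul_sub, sum_sub_distrib, ← sum_mul, hp1, one_mul]
  calc |v a - ∑ b, p b * v b|
      ≤ ∑ b, |p b * (v a - v b)| := hsplit ▸ abs_sum_le_sum_abs _ _
    _ ≤ ∑ b, p b * Δ := sum_le_sum fun b _ => by
        rw [abs_mul, abs_of_nonneg (hp b)]
        exact mul_le_mul_of_nonneg_left (hv b) (hp b)
    _ = Δ := by rw [← sum_mul, hp1, one_mul]

noncomputable def regretMatching (R : ι → ℝ) (a : ι) : ℝ :=
  if 0 < ∑ b, max (R b) 0 then max (R a) 0 / ∑ b, max (R b) 0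
  else 1 / (Fintype.card ι : ℝ)

lemma regretMatching_nonneg (R : ι → ℝ) (a : ι) : 0 ≤ regretMatching R a := by
  unfold regretMatching
  split_ifs <;> positivity

lemma sum_regretMatching [Nonempty ι] (R : ι → ℝ) : ∑ a, regretMatching R a = 1 := by
  unfold regretMatching
  split_ifs with hS
  · rw [← sum_div, div_self hS.ne']
  · rw [sum_const, card_univ, nsmul_eq_mul, mul_one_div, div_self (by positivity)]

lemma sum_max_mul_regret_regretMatching (R v : ι → ℝ) :
    ∑ a, max (R a) 0 * (v a - ∑ b, regretMatching R b * v b) = 0 := by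
  set S := ∑ b, max (R b) 0
  rcases lt_or_ge 0 S with hS | hS
  · have hσ : ∀ b, regretMatching R b = max (R b) 0 / S := fun b => if_pos hS
    simp only [hσ, div_mul_eq_mul_div, ← sum_div, mul_sub, sum_sub_distrib, ← sum_mul]
    rw [mul_div_cancel₀ _ hS.ne', sub_self]
  · have hzero := (sum_eq_zero_iff_of_nonneg fun b _ => le_max_right (R b) 0).mp
      (le_antisymm hS (sum_nonneg fun b _ => le_max_right (R b) 0))
    simp [hzero]

lemma sum_sq_max_add_regret_regretMatching_le [Nonempty ι] (R v : ι → ℝ) {Δ : ℝ}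
    (hv : ∀ a b, |v a - v b| ≤ Δ) :
    ∑ a, max (R a + (v a - ∑ b, regretMatching R b * v b)) 0 ^ 2 ≤
      ∑ a, max (R a) 0 ^ 2 + Fintype.card ι * Δ ^ 2 := by
  set r : ι → ℝ := fun a => v a - ∑ b, regretMatching R b * v b
  have hr : ∀ a, r a ^ 2 ≤ Δ ^ 2 := fun a => by
    rw [← sq_abs]
    exact pow_le_pow_left₀ (abs_nonneg _)
      (abs_sub_sum_mul_le (regretMatching_nonneg R) (sum_regretMatching R) a (hv a)) 2
  calc ∑ a, max (R a + r a) 0 ^ 2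
      ≤ ∑ a, (max (R a) 0 ^ 2 + 2 * (max (R a) 0 * r a) + r a ^ 2) :=
        sum_le_sum fun a _ => by linarith [sq_max_add_zero_le (R a) (r a)]
    _ = ∑ a, max (R a) 0 ^ 2 + 2 * ∑ a, max (R a) 0 * r a + ∑ a, r a ^ 2 := by
        rw [sum_add_distrib, sum_add_distrib, mul_sum]
    _ ≤ ∑ a, max (R a) 0 ^ 2 + 2 * 0 + ∑ _a : ι, Δ ^ 2 := by
        rw [sum_max_mul_regret_regretMatching]
        exact add_le_add le_rfl (sum_le_sum fun a _ => hr a)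
    _ = ∑ a, max (R a) 0 ^ 2 + Fintype.card ι * Δ ^ 2 := by
        rw [sum_const, card_univ, nsmul_eq_mul]
        ring

end RegretMatching

lemma le_of_sum_sq_max_zero_le {ι : Type*} [Fintype ι] {f : ι → ℝ} {c : ℝ} (hc : 0 ≤ c)
    (h : ∑ b, max (f b) 0 ^ 2 ≤ c ^ 2) (a : ι) : f a ≤ c := by
  have ha : max (f a) 0 ^ 2 ≤ c ^ 2 :=
    (single_le_sum (fun b _ => sq_nonneg (max (f b) 0)) (mem_univ a)).trans h
  exact (le_max_left _ _).trans (pow_le_pow_iff_left₀ (le_max_right _ _) hc two_ne_zero |>.mp ha)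

/-- Lemma 2 (no-regret property of regret matching) for a general finite action set: the
maximal cumulative counterfactual regret after `M` rounds is at most `Δ·√(|A|·M)`. -/
theorem tracer_regret_matching_bound
    (M : ℕ) (A : Type*) [Fintype A] [Nonempty A]
    (Δ : ℝ) (hΔ : 0 ≤ Δ)
    (v σ r R : ℕ → A → ℝ)
    (hv : ∀ m, 1 ≤ m → m ≤ M → ∀ a a', |v m a - v m a'| ≤ Δ)
    (hR0 : ∀ a, R 0 a = 0)
    (hσ : ∀ m, 1 ≤ m → ∀ a, σ m a =
      if 0 < ∑ b, max (R (m - 1) b) 0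
      then max (R (m - 1) a) 0 / ∑ b, max (R (m - 1) b) 0
      else 1 / (Fintype.card A : ℝ))
    (hr : ∀ m, 1 ≤ m → ∀ a, r m a = v m a - ∑ b, σ m b * v m b)
    (hRrec : ∀ m, 1 ≤ m → ∀ a, R m a = R (m - 1) a + r m a) :
    Finset.univ.sup' Finset.univ_nonempty (R M) ≤
      Δ * Real.sqrt ((Fintype.card A : ℝ) * M) := by
  have potential : ∀ m ≤ M, ∑ a, max (R m a) 0 ^ 2 ≤ Fintype.card A * Δ ^ 2 * m := by
    intro m
    induction m with
    | zero => simp [hR0]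
    | succ k ih =>
      intro hk
      have hRk : R (k + 1) = fun a =>
          R k a + (v (k + 1) a - ∑ b, regretMatching (R k) b * v (k + 1) b) := by
        funext a
        simp only [hRrec (k + 1) k.succ_pos a, hr (k + 1) k.succ_pos a, hσ (k + 1) k.succ_pos]
        rfl
      rw [hRk]
      refine (sum_sq_max_add_regret_regretMatching_le (R k) (v (k + 1))
        (hv (k + 1) k.succ_pos hk)).trans ?_
      push_cast
      linarith [ih (Nat.le_of_succ_le hk)]
  refine sup'_le _ _ fun a _ => le_of_sum_sq_max_zero_le (by positivity) ?_ a
  rw [mul_pow, Real.sq_sqrt (by positivity)]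
  linarith [potential M le_rfl]
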